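/- Let X₁,…,X_p and R be random variables with finitely many values on a finite probability space such that R is independent of the tuple (X₁,…,X_p), and let C = f(X₁, R) for some function f. Then the conditional total correlation satisfies I(X₁:⋯:X_p | C) ≤ I(X₁:⋯:X_p). -/

import Mathlib

/-!
For `X = (X₁, …, X_p)` one has
`I(X₁:⋯:X_p) − I(X₁:⋯:X_p | C) = Σᵢ I(Xᵢ:C) − I(X:C)`.
Since `C = f(X₁, R)` with `R` independent of `X`, the conditional law of `C` given `X = a` is
the law of `f(a₁, R)`, which depends on `a₁` only; hence `H(C | X) = H(C | X₁)` and
`I(X:C) = I(X₁:C)`, one of the nonnegative summands.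
-/

open scoped BigOperators

noncomputable section

/-- Base-2 Shannon entropy of a finitely supported (sub)probability vector. -/
def shannonH {V : Type} [Fintype V] (q : V → ℝ) : ℝ :=
  -∑ a, q a * Real.logb 2 (q a)

/-- Distribution (probability mass function) of a random variable `X` on a finite
probability space with probability mass function `μ`. -/
def pdist {Ω V : Type} [Fintype Ω] [DecidableEq V] (μ : Ω → ℝ) (X : Ω → V) : V → ℝ :=
  fun a => ∑ ω, if X ω = a then μ ω else 0

/-- Shannon entropy `H(X)` of a random variable. -/
def entH {Ω V : Type} [Fintype Ω] [Fintype V] [DecidableEq V] (μ : Ω → ℝ) (X : Ω → V) : ℝ :=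
  shannonH (pdist μ X)

/-- Conditional entropy `H(X|Y) = H(X,Y) − H(Y)`. -/
def condH {Ω V W : Type} [Fintype Ω] [Fintype V] [DecidableEq V] [Fintype W] [DecidableEq W]
    (μ : Ω → ℝ) (X : Ω → V) (Y : Ω → W) : ℝ :=
  entH μ (fun ω => (X ω, Y ω)) - entH μ Y

/-- Mutual information `I(X:Y) = H(X) + H(Y) − H(X,Y)`. -/
def mutualI {Ω V W : Type} [Fintype Ω] [Fintype V] [DecidableEq V] [Fintype W] [DecidableEq W]
    (μ : Ω → ℝ) (X : Ω → V) (Y : Ω → W) : ℝ :=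
  entH μ X + entH μ Y - entH μ (fun ω => (X ω, Y ω))

/-- Total correlation `I(X₁:⋯:X_p) = Σᵢ H(Xᵢ) − H(X₁,…,X_p)`. -/
def totCorr {Ω : Type} [Fintype Ω] {p : ℕ} {V : Fin p → Type}
    [∀ i, Fintype (V i)] [∀ i, DecidableEq (V i)]
    (μ : Ω → ℝ) (X : ∀ i, Ω → V i) : ℝ :=
  (∑ i, entH μ (X i)) - entH μ (fun ω => (fun i => X i ω))

/-- Conditional total correlation `I(X₁:⋯:X_p|C) = Σᵢ H(Xᵢ|C) − H(X₁,…,X_p|C)`. -/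
def condTotCorr {Ω : Type} [Fintype Ω] {p : ℕ} {V : Fin p → Type}
    [∀ i, Fintype (V i)] [∀ i, DecidableEq (V i)] {W : Type} [Fintype W] [DecidableEq W]
    (μ : Ω → ℝ) (X : ∀ i, Ω → V i) (C : Ω → W) : ℝ :=
  (∑ i, condH μ (X i) C) - condH μ (fun ω => (fun i => X i ω)) C

open Finset Real

section Pdist

variable {Ω : Type} [Fintype Ω] {U W : Type} [DecidableEq U] [DecidableEq W]

lemma pdist_nonneg {μ : Ω → ℝ} (hμ0 : ∀ ω, 0 ≤ μ ω) (X : Ω → U) (a : U) :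
    0 ≤ pdist μ X a :=
  sum_nonneg fun ω _ => by split_ifs <;> simp [hμ0 ω]

lemma sum_pdist_mul [Fintype U] (μ : Ω → ℝ) (X : Ω → U) (φ : U → ℝ) :
    ∑ a, pdist μ X a * φ a = ∑ ω, μ ω * φ (X ω) := by
  simp only [pdist, sum_mul, ite_mul, zero_mul]
  rw [sum_comm]
  simp

lemma sum_pdist [Fintype U] {μ : Ω → ℝ} (hμ1 : ∑ ω, μ ω = 1) (X : Ω → U) :
    ∑ a, pdist μ X a = 1 := by
  simpa [hμ1] using sum_pdist_mul μ X fun _ => 1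

lemma pdist_comp [Fintype U] (μ : Ω → ℝ) (X : Ω → U) (φ : U → W) (b : W) :
    pdist μ (fun ω => φ (X ω)) b = ∑ a, if φ a = b then pdist μ X a else 0 := by
  simpa [pdist, mul_ite] using (sum_pdist_mul μ X fun a => if φ a = b then 1 else 0).symm

lemma pdist_fst [Fintype W] (μ : Ω → ℝ) (X : Ω → U) (Y : Ω → W) (a : U) :
    pdist μ X a = ∑ b, pdist μ (fun ω => (X ω, Y ω)) (a, b) := by
  unfold pdist
  rw [sum_comm]
  simp [Prod.ext_iff, ite_and]

lemma pdist_snd [Fintype U] (μ : Ω → ℝ) (X : Ω → U) (Y : Ω → W) (b : W) :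
    pdist μ Y b = ∑ a, pdist μ (fun ω => (X ω, Y ω)) (a, b) := by
  unfold pdist
  rw [sum_comm]
  simp [Prod.ext_iff, ite_and]

end Pdist

section Entropy

variable {A B : Type} [Fintype A] [Fintype B]

lemma shannonH_eq_sum_negMulLog (q : A → ℝ) :
    shannonH q = (∑ a, negMulLog (q a)) / log 2 := by
  simp only [shannonH, negMulLog, logb, sum_div, ← sum_neg_distrib]
  congr 1 with a
  ring

lemma shannonH_of_eq_mul_kernel (q : A × B → ℝ) (m : A → ℝ) (g : A → B → ℝ)
    (hg : ∀ a, ∑ b, g a b = 1) (hq : ∀ a b, q (a, b) = m a * g a b) :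
    shannonH q = shannonH m + ∑ a, m a * shannonH (g a) := by
  simp only [shannonH_eq_sum_negMulLog, Fintype.sum_prod_type, hq, negMulLog_mul,
    sum_add_distrib, ← sum_mul, hg, one_mul, ← mul_sum, mul_div_assoc, add_div, sum_div]

lemma mul_log_add_mul_log_le {p x y : ℝ} (hp : 0 ≤ p) (hpx : p ≤ x) (hpy : p ≤ y) :
    p * log x + p * log y ≤ p * log p + (x * y - p) := by
  rcases hp.eq_or_lt with rfl | hp
  · simp [mul_nonneg hpx hpy]
  have hxy : 0 < x * y := mul_pos (hp.trans_le hpx) (hp.trans_le hpy)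
  have h := mul_le_mul_of_nonneg_left (log_le_sub_one_of_pos (div_pos hxy hp)) hp.le
  rw [log_div hxy.ne' hp.ne', log_mul (hp.trans_le hpx).ne' (hp.trans_le hpy).ne'] at h
  have hcancel : p * (x * y / p - 1) = x * y - p := by field_simp
  linarith

lemma shannonH_le_add_marginals (q : A × B → ℝ) (hq0 : ∀ x, 0 ≤ q x) (hq1 : ∑ x, q x = 1) :
    shannonH q ≤ shannonH (fun a => ∑ b, q (a, b)) + shannonH (fun b => ∑ a, q (a, b)) := by
  set qA : A → ℝ := fun a => ∑ b, q (a, b)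
  set qB : B → ℝ := fun b => ∑ a, q (a, b)
  have hqA (a : A) (b : B) : q (a, b) ≤ qA a := single_le_sum (fun b _ => hq0 (a, b)) (mem_univ b)
  have hqB (a : A) (b : B) : q (a, b) ≤ qB b := single_le_sum (fun a _ => hq0 (a, b)) (mem_univ a)
  have hprod : ∑ x : A × B, qA x.1 * qB x.2 = 1 := by
    have hA1 : ∑ a, qA a = 1 := by rw [← hq1, Fintype.sum_prod_type]
    have hB1 : ∑ b, qB b = 1 := by rw [← hq1, Fintype.sum_prod_type_right]
    rw [Fintype.sum_prod_type, ← sum_mul_sum, hA1, hB1, one_mul]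
  have key :
      ∑ x : A × B, (q x * log (qA x.1) + q x * log (qB x.2)) ≤ ∑ x : A × B, q x * log (q x) :=
    calc _ ≤ ∑ x : A × B, (q x * log (q x) + (qA x.1 * qB x.2 - q x)) :=
          sum_le_sum fun x _ => mul_log_add_mul_log_le (hq0 x) (hqA _ _) (hqB _ _)
      _ = _ := by rw [sum_add_distrib, sum_sub_distrib, hprod, hq1, sub_self, add_zero]
  have hA : ∑ a, negMulLog (qA a) = -∑ x : A × B, q x * log (qA x.1) := by
    simp [negMulLog, Fintype.sum_prod_type, sum_mul, qA]
  have hB : ∑ b, negMulLog (qB b) = -∑ x : A × B, q x * log (qB x.2) := by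
    simp [negMulLog, Fintype.sum_prod_type_right, sum_mul, qB]
  rw [shannonH_eq_sum_negMulLog, shannonH_eq_sum_negMulLog, shannonH_eq_sum_negMulLog, ← add_div]
  refine div_le_div_of_nonneg_right ?_ (log_nonneg one_le_two)
  rw [hA, hB, ← neg_add, ← sum_add_distrib]
  simpa only [negMulLog, neg_mul, sum_neg_distrib, neg_le_neg_iff] using key

end Entropy

section Channel

variable {Ω : Type} [Fintype Ω] {U W T : Type} [DecidableEq U] [DecidableEq W] [DecidableEq T]

def IndepPdist (μ : Ω → ℝ) (Z : Ω → U) (R : Ω → W) : Prop :=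
  ∀ u r, pdist μ (fun ω => (Z ω, R ω)) (u, r) = pdist μ Z u * pdist μ R r

lemma IndepPdist.comp_left [Fintype U] [Fintype W] {U' : Type} [DecidableEq U'] {μ : Ω → ℝ}
    {Z : Ω → U} {R : Ω → W} (h : IndepPdist μ Z R) (φ : U → U') :
    IndepPdist μ (fun ω => φ (Z ω)) R := by
  intro b r
  have hpush := pdist_comp μ (fun ω => (Z ω, R ω)) (fun x => (φ x.1, x.2)) (b, r)
  simp only at hpush
  rw [hpush, pdist_comp μ Z φ, sum_mul, Fintype.sum_prod_type]
  simp only [Prod.ext_iff, ite_and, sum_ite_irrel, sum_ite_eq', mem_univ, ↓reduceIte, h _ r,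
    sum_const_zero, ite_mul, zero_mul]

/-- `pdist (pdist μ R) (g u)` is the law of `g u R`. -/
lemma pdist_pair_of_indep [Fintype U] [Fintype W] {μ : Ω → ℝ} {Z : Ω → U} {R : Ω → W}
    (h : IndepPdist μ Z R) {g : U → W → T} {C : Ω → T} (hC : ∀ ω, C ω = g (Z ω) (R ω))
    (u : U) (c : T) :
    pdist μ (fun ω => (Z ω, C ω)) (u, c) = pdist μ Z u * pdist (pdist μ R) (g u) c := by
  have hpush := pdist_comp μ (fun ω => (Z ω, R ω)) (fun x => (x.1, g x.1 x.2)) (u, c)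
  simp only [← hC] at hpush
  rw [hpush, Fintype.sum_prod_type]
  simp only [Prod.ext_iff, ite_and, sum_ite_irrel, sum_const_zero, sum_ite_eq', mem_univ,
    ↓reduceIte]
  simp only [h u, ← mul_ite_zero, ← mul_sum]
  rfl

end Channel

section MutualInformation

variable {Ω : Type} [Fintype Ω] {U W T : Type} [Fintype U] [DecidableEq U] [Fintype W]
  [DecidableEq W] [Fintype T] [DecidableEq T]

lemma mutualI_nonneg {μ : Ω → ℝ} (hμ0 : ∀ ω, 0 ≤ μ ω) (hμ1 : ∑ ω, μ ω = 1) (X : Ω → U)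
    (Y : Ω → W) : 0 ≤ mutualI μ X Y := by
  have h := shannonH_le_add_marginals _ (pdist_nonneg hμ0 (fun ω => (X ω, Y ω)))
    (sum_pdist hμ1 _)
  rw [← funext (pdist_fst μ X Y), ← funext (pdist_snd μ X Y)] at h
  rw [mutualI, entH, entH, entH]
  linarith

lemma mutualI_eq_of_indep {μ : Ω → ℝ} (hμ1 : ∑ ω, μ ω = 1) {Z : Ω → U} {R : Ω → W}
    (h : IndepPdist μ Z R) {g : U → W → T} {C : Ω → T} (hC : ∀ ω, C ω = g (Z ω) (R ω)) :
    mutualI μ Z C = entH μ C - ∑ ω, μ ω * shannonH (pdist (pdist μ R) (g (Z ω))) := by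
  have hchain := shannonH_of_eq_mul_kernel _ _ _
    (fun u => sum_pdist (sum_pdist hμ1 R) (g u)) (pdist_pair_of_indep h hC)
  rw [mutualI, entH, entH, entH, hchain,
    sum_pdist_mul μ Z fun u => shannonH (pdist (pdist μ R) (g u))]
  ring

end MutualInformation

lemma totCorr_sub_condTotCorr {Ω : Type} [Fintype Ω] {p : ℕ} {V : Fin p → Type}
    [∀ i, Fintype (V i)] [∀ i, DecidableEq (V i)] {T : Type} [Fintype T] [DecidableEq T]
    (μ : Ω → ℝ) (X : ∀ i, Ω → V i) (C : Ω → T) :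
    totCorr μ X - condTotCorr μ X C =
      ∑ i, mutualI μ (X i) C - mutualI μ (fun ω i => X i ω) C := by
  simp only [totCorr, condTotCorr, condH, mutualI, sum_sub_distrib, sum_add_distrib]
  ring

/-- **Public communication from one party's data and shared randomness cannot increase
the total correlation.** If `R` is independent of `(X₁,…,X_p)` and `C = f(X₁, R)`, then
`I(X₁:⋯:X_p | C) ≤ I(X₁:⋯:X_p)`. -/
theorem stmt10 {Ω : Type} [Fintype Ω] {p : ℕ} (hp : 1 ≤ p) {V : Fin p → Type}
    [∀ i, Fintype (V i)] [∀ i, DecidableEq (V i)]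
    {W T : Type} [Fintype W] [DecidableEq W] [Fintype T] [DecidableEq T]
    (μ : Ω → ℝ) (hμ0 : ∀ ω, 0 ≤ μ ω) (hμ1 : ∑ ω, μ ω = 1)
    (X : ∀ i, Ω → V i) (R : Ω → W)
    (hindep : ∀ (a : ∀ i, V i) (r : W),
      pdist μ (fun ω => ((fun i => X i ω), R ω)) (a, r)
        = pdist μ (fun ω => (fun i => X i ω)) a * pdist μ R r)
    (f : V ⟨0, hp⟩ → W → T) (C : Ω → T) (hC : ∀ ω, C ω = f (X ⟨0, hp⟩ ω) (R ω)) :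
    condTotCorr μ X C ≤ totCorr μ X := by
  have hjoint : mutualI μ (fun ω i => X i ω) C = mutualI μ (X ⟨0, hp⟩) C := by
    rw [mutualI_eq_of_indep hμ1 hindep (g := fun a r => f (a ⟨0, hp⟩) r) hC,
      mutualI_eq_of_indep hμ1 (IndepPdist.comp_left hindep fun a => a ⟨0, hp⟩) hC]
  have hle : mutualI μ (X ⟨0, hp⟩) C ≤ ∑ i, mutualI μ (X i) C :=
    single_le_sum (fun i _ => mutualI_nonneg hμ0 hμ1 (X i) C) (mem_univ _)
  linarith [totCorr_sub_condTotCorr μ X C]
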